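/- arXiv:2210.11053 — 2 statements merged into one kernel-verified Lean document; each statement's English description precedes it below -/
import Mathlib

section
/- For each n, let N_n be a finite node set with |N_n| → ∞, g_n : N_n → G a group assignment onto a fixed finite set G, and let (θ_i^{o}, θ_i^{i})_{i∈N_n} and (ω_{rs})_{r,s∈G} be positive DCSBM parameters (depending on n) with Σ_{i : g_n i = r} θ_i^o = 1 and Σ_{i : g_n i = r} θ_i^i = 1 for all r ∈ G. Let μ_min(n) be the minimum over all i ∈ N_n and s ∈ G of θ_i^o ω_{g_n i, s} and θ_i^i ω_{s, g_n i}, and assume |N_n| / μ_min(n) → 0 as n → ∞ (a quantitative form of the condition that every expected group-degree tends to infinity). Let λ̂_n be the log-likelihood ratio statistic computed from a sampled adjacency matrix with independent Poisson entries of mean θ_i^o θ_j^i ω_{g_n i, g_n j} via λ̂_n = Σ_{i,s} [ d_{i,s}^o log d_{i,s}^o + d_{i,s}^i log d_{i,s}^i ] − Σ_i [ d_i^o log d_i^o + d_i^i log d_i^i ] − Σ_{r,s} 2 m_{rs} log m_{rs} + Σ_r [ d_r^o log d_r^o + d_r^i log d_r^i ] (with 0 log 0 = 0). Then E[λ̂_n]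 − (|G| − 1)(|N_n| − |G|) → 0 as n → ∞. -/
open MeasureTheory ProbabilityTheory Filter
open scoped ProbabilityTheory NNReal

/-- `x log x`, extended by `0 log 0 = 0` (note `Real.log 0 = 0`). -/
noncomputable def xlog (x : ℝ) : ℝ := x * Real.log x

/-- Out-degree of node `i` to group `s`: `d_{i,s}^o = ∑_{j : g j = s} A i j`. -/
def dOut {N G : Type*} [Fintype N] [DecidableEq G] (g : N → G) (a : N → N → ℕ)
    (i : N) (s : G) : ℕ := ∑ j ∈ Finset.univ.filter (fun j => g j = s), a i j

/-- In-degree of node `i` from group `s`: `d_{i,s}^i = ∑_{j : g j = s} A j i`. -/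
def dIn {N G : Type*} [Fintype N] [DecidableEq G] (g : N → G) (a : N → N → ℕ)
    (i : N) (s : G) : ℕ := ∑ j ∈ Finset.univ.filter (fun j => g j = s), a j i

/-- Total out-degree of node `i`: `d_i^o = ∑_j A i j`. -/
def dTotOut {N : Type*} [Fintype N] (a : N → N → ℕ) (i : N) : ℕ := ∑ j : N, a i j

/-- Total in-degree of node `i`: `d_i^i = ∑_j A j i`. -/
def dTotIn {N : Type*} [Fintype N] (a : N → N → ℕ) (i : N) : ℕ := ∑ j : N, a j i

/-- Total out-degree of group `r`: `d_r^o = ∑_{i : g i = r} d_i^o`. -/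
def dGrpOut {N G : Type*} [Fintype N] [DecidableEq G] (g : N → G) (a : N → N → ℕ)
    (r : G) : ℕ := ∑ i ∈ Finset.univ.filter (fun i => g i = r), dTotOut a i

/-- Total in-degree of group `r`: `d_r^i = ∑_{i : g i = r} d_i^i`. -/
def dGrpIn {N G : Type*} [Fintype N] [DecidableEq G] (g : N → G) (a : N → N → ℕ)
    (r : G) : ℕ := ∑ i ∈ Finset.univ.filter (fun i => g i = r), dTotIn a i

/-- Number of edges from group `r` to group `s`. -/
def mEdges {N G : Type*} [Fintype N] [DecidableEq G] (g : N → G) (a : N → N → ℕ)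
    (r s : G) : ℕ :=
  ∑ i ∈ Finset.univ.filter (fun i => g i = r),
    ∑ j ∈ Finset.univ.filter (fun j => g j = s), a i j

/-- The log-likelihood-ratio statistic `λ̂` of the mixed-propensity model against DCSBM,
computed from an adjacency matrix `a` (with the convention `0 log 0 = 0`). -/
noncomputable def llrStat {N G : Type*} [Fintype N] [Fintype G] [DecidableEq G]
    (g : N → G) (a : N → N → ℕ) : ℝ :=
  (∑ i : N, ∑ s : G, (xlog (dOut g a i s : ℝ) + xlog (dIn g a i s : ℝ)))
    - (∑ i : N, (xlog (dTotOut a i : ℝ) + xlog (dTotIn a i : ℝ)))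
    - (∑ r : G, ∑ s : G, 2 * xlog (mEdges g a r s : ℝ))
    + (∑ r : G, (xlog (dGrpOut g a r : ℝ) + xlog (dGrpIn g a r : ℝ)))

/-!
Every degree entering `llrStat` is a sum of independent Poisson entries of the adjacency matrix,
hence Poisson; by the within-group normalisation of `θᵒ` and `θⁱ` its mean is `θᵒᵢ ω_{g i, s}`,
`θᵒᵢ Σₛ ω_{g i, s}`, `ω_{rs}`, `Σₛ ω_{rs}` or one of their in-degree analogues.

For `X ~ Po(μ)` with `μ ≥ 1` we have `E[X log X] = μ E[log (X + 1)] = μ log μ + 1/2 + O(1/μ)`,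
by a third-order Taylor expansion of `log (1 + t)` at `t = (X + 1 - μ) / μ`. Substituting this
into the statistic, the `μ log μ` parts cancel exactly (`xlog (x y) = y xlog x + x xlog y` splits
off the `θ`'s, which sum to one over each group), the constants `1/2` add up to
`(|G| - 1)(|N| - |G|)`, and the `2 (|N| + |G|)(|G| + 1)` error terms are `O(|N| / μ_min)`.
-/

section PoissonMoments

variable (r : ℝ≥0)

lemma poissonMeasure_zero : Po(0) = Measure.dirac 0 := by
  refine Measure.ext_of_singleton fun k => ?_
  rw [poissonMeasure_singleton]
  cases k <;> simp

lemma hasSum_poissonMeasure_real : HasSum (fun k => Po(r).real {k}) 1 := by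
  simpa only [poissonMeasure_real_singleton] using hasSum_one_poissonMeasure r

lemma poissonMeasure_real_succ_mul (k : ℕ) :
    Po(r).real {k + 1} * (k + 1) = r * Po(r).real {k} := by
  simp only [poissonMeasure_real_singleton, Nat.factorial_succ, pow_succ]
  push_cast
  field_simp

lemma hasSum_poissonMeasure_real_mul_descFactorial (j : ℕ) :
    HasSum (fun k => Po(r).real {k} * k.descFactorial j) ((r : ℝ) ^ j) := by
  induction j with
  | zero => simpa using hasSum_poissonMeasure_real r
  | succ j ih =>
    refine (hasSum_nat_add_iff' 1).mp ?_
    have hshift : (fun k : ℕ => Po(r).real {k + 1} * ((k + 1).descFactorial (j + 1) : ℕ))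
        = fun k => r * (Po(r).real {k} * k.descFactorial j) := funext fun k => by
      rw [Nat.succ_descFactorial_succ, Nat.cast_mul, ← mul_assoc, Nat.cast_succ,
        poissonMeasure_real_succ_mul, mul_assoc]
    simp only [Finset.sum_range_one, Nat.zero_descFactorial_succ, Nat.cast_zero, mul_zero,
      sub_zero]
    rw [hshift, pow_succ']
    exact ih.mul_left _

-- The coefficients below expand `(k + 1 - r) ^ j` in the falling-factorial basis
-- `k.descFactorial i`.
lemma hasSum_poisson_succ_sub_pow_one :
    HasSum (fun k => Po(r).real {k} * ((k : ℝ) + 1 - r)) 1 := by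
  have h := hasSum_poissonMeasure_real_mul_descFactorial r
  convert (h 1).add ((h 0).mul_left (1 - r : ℝ)) using 1
  · ext k
    simp only [← descPochhammer_eval_eq_descFactorial ℝ, descPochhammer_succ_right,
      descPochhammer_zero, Polynomial.eval_mul, Polynomial.eval_sub, Polynomial.eval_X,
      Polynomial.eval_natCast, Polynomial.eval_one]
    ring
  · ring

lemma hasSum_poisson_succ_sub_pow_two :
    HasSum (fun k => Po(r).real {k} * ((k : ℝ) + 1 - r) ^ 2) (r + 1 : ℝ) := by
  have h := hasSum_poissonMeasure_real_mul_descFactorial r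
  convert ((h 2).add ((h 1).mul_left (3 - 2 * r : ℝ))).add
    ((h 0).mul_left (1 - 2 * r + r ^ 2 : ℝ)) using 1
  · ext k
    simp only [← descPochhammer_eval_eq_descFactorial ℝ, descPochhammer_succ_right,
      descPochhammer_zero, Polynomial.eval_mul, Polynomial.eval_sub, Polynomial.eval_X,
      Polynomial.eval_natCast, Polynomial.eval_one]
    ring
  · ring

lemma hasSum_poisson_succ_sub_pow_three :
    HasSum (fun k => Po(r).real {k} * ((k : ℝ) + 1 - r) ^ 3) (4 * r + 1 : ℝ) := by
  have h := hasSum_poissonMeasure_real_mul_descFactorial r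
  convert (((h 3).add ((h 2).mul_left (6 - 3 * r : ℝ))).add
    ((h 1).mul_left (7 - 9 * r + 3 * r ^ 2 : ℝ))).add
    ((h 0).mul_left (1 - 3 * r + 3 * r ^ 2 - r ^ 3 : ℝ)) using 1
  · ext k
    simp only [← descPochhammer_eval_eq_descFactorial ℝ, descPochhammer_succ_right,
      descPochhammer_zero, Polynomial.eval_mul, Polynomial.eval_sub, Polynomial.eval_X,
      Polynomial.eval_natCast, Polynomial.eval_one]
    ring
  · ring

lemma hasSum_poisson_succ_sub_pow_four :
    HasSum (fun k => Po(r).real {k} * ((k : ℝ) + 1 - r) ^ 4) (3 * r ^ 2 + 11 * r + 1 : ℝ) := by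
  have h := hasSum_poissonMeasure_real_mul_descFactorial r
  convert ((((h 4).add ((h 3).mul_left (10 - 4 * r : ℝ))).add
    ((h 2).mul_left (25 - 24 * r + 6 * r ^ 2 : ℝ))).add
    ((h 1).mul_left (15 - 28 * r + 18 * r ^ 2 - 4 * r ^ 3 : ℝ))).add
    ((h 0).mul_left (1 - 4 * r + 6 * r ^ 2 - 4 * r ^ 3 + r ^ 4 : ℝ)) using 1
  · ext k
    simp only [← descPochhammer_eval_eq_descFactorial ℝ, descPochhammer_succ_right,
      descPochhammer_zero, Polynomial.eval_mul, Polynomial.eval_sub, Polynomial.eval_X,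
      Polynomial.eval_natCast, Polynomial.eval_one]
    ring
  · ring

lemma hasSum_poisson_succ_sub_pow_six :
    HasSum (fun k => Po(r).real {k} * ((k : ℝ) + 1 - r) ^ 6)
      (15 * r ^ 3 + 130 * r ^ 2 + 57 * r + 1 : ℝ) := by
  have h := hasSum_poissonMeasure_real_mul_descFactorial r
  convert ((((((h 6).add ((h 5).mul_left (21 - 6 * r : ℝ))).add
    ((h 4).mul_left (140 - 90 * r + 15 * r ^ 2 : ℝ))).add
    ((h 3).mul_left (350 - 390 * r + 150 * r ^ 2 - 20 * r ^ 3 : ℝ))).add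
    ((h 2).mul_left (301 - 540 * r + 375 * r ^ 2 - 120 * r ^ 3 + 15 * r ^ 4 : ℝ))).add
    ((h 1).mul_left (63 - 186 * r + 225 * r ^ 2 - 140 * r ^ 3 + 45 * r ^ 4 - 6 * r ^ 5 : ℝ))).add
    ((h 0).mul_left (1 - 6 * r + 15 * r ^ 2 - 20 * r ^ 3 + 15 * r ^ 4 - 6 * r ^ 5 + r ^ 6 : ℝ))
    using 1
  · ext k
    simp only [← descPochhammer_eval_eq_descFactorial ℝ, descPochhammer_succ_right,
      descPochhammer_zero, Polynomial.eval_mul, Polynomial.eval_sub, Polynomial.eval_X,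
      Polynomial.eval_natCast, Polynomial.eval_one]
    ring
  · ring

end PoissonMoments

section PoissonXLog

open Real

lemma xlog_natCast_nonneg (k : ℕ) : 0 ≤ xlog k :=
  mul_nonneg k.cast_nonneg (log_natCast_nonneg k)

variable (r : ℝ≥0)

lemma summable_poissonMeasure_real_mul_log_succ :
    Summable fun k => Po(r).real {k} * log (k + 1) := by
  refine .of_nonneg_of_le (fun k => mul_nonneg measureReal_nonneg (log_nonneg ?_)) (fun k => ?_)
    (hasSum_poissonMeasure_real_mul_descFactorial r 1).summable
  · linarith [k.cast_nonneg (α := ℝ)]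
  · have : log (k + 1) ≤ k := by linarith [log_le_sub_one_of_pos (x := k + 1) (by positivity)]
    simpa using mul_le_mul_of_nonneg_left this measureReal_nonneg

lemma hasSum_poissonMeasure_real_mul_xlog :
    HasSum (fun k => Po(r).real {k} * xlog k) (r * ∑' k, Po(r).real {k} * log (k + 1)) := by
  refine (hasSum_nat_add_iff' 1).mp ?_
  have hshift : (fun k : ℕ => Po(r).real {k + 1} * xlog ((k + 1 : ℕ) : ℝ))
      = fun k => r * (Po(r).real {k} * log (k + 1)) := funext fun k => by
    rw [xlog, Nat.cast_succ, ← mul_assoc, poissonMeasure_real_succ_mul, mul_assoc]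
  have hzero : Po(r).real {0} * xlog ((0 : ℕ) : ℝ) = 0 := by simp [xlog]
  simp only [Finset.sum_range_one, hzero, sub_zero]
  rw [hshift]
  exact (summable_poissonMeasure_real_mul_log_succ r).hasSum.mul_left _

lemma integrable_xlog_poissonMeasure : Integrable (fun k : ℕ => xlog k) Po(r) := by
  rw [integrable_poissonMeasure_iff]
  simpa only [← poissonMeasure_real_singleton, norm_of_nonneg (xlog_natCast_nonneg _)]
    using (hasSum_poissonMeasure_real_mul_xlog r).summable

lemma integral_xlog_poissonMeasure :
    ∫ k, xlog k ∂Po(r) = r * ∑' k, Po(r).real {k} * log (k + 1) := by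
  rw [integral_countable (integrable_xlog_poissonMeasure r)]
  exact (hasSum_poissonMeasure_real_mul_xlog r).tsum_eq

end PoissonXLog

lemma abs_log_one_add_sub_taylor_le {x L : ℝ} (hL : 0 ≤ L) (hx : 0 < 1 + x)
    (hlow : -L ≤ Real.log (1 + x)) :
    |Real.log (1 + x) - (x - x ^ 2 / 2 + x ^ 3 / 3)| ≤ 19 * x ^ 4 + 64 * L * x ^ 6 := by
  set a := |x| with ha
  have h4 : x ^ 4 = a ^ 4 := ((even_two_mul 2).pow_abs x).symm
  have h6 : x ^ 6 = a ^ 6 := ((even_two_mul 3).pow_abs x).symm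
  have ha0 : 0 ≤ a := abs_nonneg x
  rcases le_or_gt a (1 / 2) with hsmall | hlarge
  · have key := Real.abs_log_sub_add_sum_range_le (x := -x) (by rw [abs_neg, ← ha]; linarith) 3
    norm_num [Finset.sum_range_succ, ← ha] at key
    calc |Real.log (1 + x) - (x - x ^ 2 / 2 + x ^ 3 / 3)|
        = |-x + x ^ 2 / 2 + (-x) ^ 3 / 3 + Real.log (1 + x)| := by congr 1; ring
      _ ≤ a ^ 4 / (1 - a) := key
      _ ≤ 2 * a ^ 4 := by rw [div_le_iff₀ (by linarith)]; nlinarith [pow_nonneg ha0 4]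
      _ ≤ 19 * x ^ 4 + 64 * L * x ^ 6 := by
          rw [h4, h6]
          nlinarith [pow_nonneg ha0 4, mul_nonneg hL (pow_nonneg ha0 6)]
  · have hup : Real.log (1 + x) ≤ x := by linarith [Real.log_le_sub_one_of_pos hx]
    have h3 : |x ^ 3| = a ^ 3 := (pow_abs x 3).symm
    have hlog : |Real.log (1 + x)| ≤ L + a := abs_le.mpr ⟨by linarith, by linarith [le_abs_self x]⟩
    have ha2 : 1 / 4 ≤ a ^ 2 := by nlinarith
    have ha3 : 1 / 8 ≤ a ^ 3 := by nlinarith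
    calc |Real.log (1 + x) - (x - x ^ 2 / 2 + x ^ 3 / 3)|
        ≤ |Real.log (1 + x)| + a + a ^ 2 / 2 + |x ^ 3| / 3 := by
          rw [← sq_abs x]
          refine abs_le.mpr ⟨?_, ?_⟩ <;>
            linarith [le_abs_self x, neg_abs_le x, le_abs_self (x ^ 3), neg_abs_le (x ^ 3),
              le_abs_self (Real.log (1 + x)), neg_abs_le (Real.log (1 + x)), sq_abs x]
      _ ≤ L + 2 * (8 * a ^ 4) + 2 * a ^ 4 + a ^ 4 := by
          rw [h3]; nlinarith [mul_nonneg ha0 (pow_nonneg ha0 3)]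
      _ ≤ 19 * x ^ 4 + 64 * L * x ^ 6 := by
          rw [h4, h6]; nlinarith [mul_nonneg hL (by nlinarith : (0 : ℝ) ≤ 64 * a ^ 6 - 1)]

section PoissonXLogAsymptotics

open Real

variable {r : ℝ≥0}

lemma hasSum_poisson_div_pow {j : ℕ} {v : ℝ}
    (h : HasSum (fun k => Po(r).real {k} * ((k : ℝ) + 1 - r) ^ j) v) :
    HasSum (fun k => Po(r).real {k} * (((k : ℝ) + 1 - r) / r) ^ j) (v / r ^ j) := by
  simpa only [div_pow, mul_div_assoc] using h.div_const _

/-- The sixth moment controls `t = (k + 1 - r) / r` near `-1`, where `log (1 + t)` is only bounded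
below by `-log r`. -/
lemma abs_tsum_poisson_log_taylor_remainder_le (hr : 1 ≤ (r : ℝ)) :
    |∑' k, Po(r).real {k} * (log (1 + ((k : ℝ) + 1 - r) / r)
        - (((k : ℝ) + 1 - r) / r - (((k : ℝ) + 1 - r) / r) ^ 2 / 2
          + (((k : ℝ) + 1 - r) / r) ^ 3 / 3))| ≤ 13300 / (r : ℝ) ^ 2 := by
  have hr0 : (0 : ℝ) < r := by linarith
  have hlogr : 0 ≤ log r := log_nonneg hr
  have hmajorant := ((hasSum_poisson_div_pow (hasSum_poisson_succ_sub_pow_four r)).mul_left 19).add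
    ((hasSum_poisson_div_pow (hasSum_poisson_succ_sub_pow_six r)).mul_left (64 * log r))
  rw [← norm_eq_abs]
  refine le_trans (tsum_of_norm_bounded hmajorant fun k => ?_) ?_
  · have hone_add : 1 + ((k : ℝ) + 1 - r) / r = (k + 1) / r := by field_simp; ring
    have hlow : -log r ≤ log (1 + ((k : ℝ) + 1 - r) / r) := by
      rw [hone_add, log_div (by positivity) hr0.ne']
      linarith [log_nonneg (by linarith [k.cast_nonneg (α := ℝ)] : (1 : ℝ) ≤ k + 1)]
    rw [norm_eq_abs, abs_mul, abs_of_nonneg measureReal_nonneg]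
    nlinarith [mul_le_mul_of_nonneg_left
      (abs_log_one_add_sub_taylor_le hlogr (by rw [hone_add]; positivity) hlow)
      (measureReal_nonneg (μ := Po(r)) (s := {k}))]
  · rw [← sub_nonneg]
    have e : 13300 / (r : ℝ) ^ 2 - (19 * ((3 * r ^ 2 + 11 * r + 1) / r ^ 4)
        + 64 * log r * ((15 * r ^ 3 + 130 * r ^ 2 + 57 * r + 1) / r ^ 6))
        = (13300 * r ^ 4 - 19 * (3 * r ^ 2 + 11 * r + 1) * r ^ 2
          - 64 * log r * (15 * r ^ 3 + 130 * r ^ 2 + 57 * r + 1)) / r ^ 6 := by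
      field_simp
      ring
    rw [e]
    refine div_nonneg ?_ (by positivity)
    have hlog_le : 64 * log r * (15 * r ^ 3 + 130 * r ^ 2 + 57 * r + 1)
        ≤ 64 * r * (15 * r ^ 3 + 130 * r ^ 2 + 57 * r + 1) :=
      mul_le_mul_of_nonneg_right (by linarith [log_le_sub_one_of_pos hr0]) (by positivity)
    have h1 : (r : ℝ) ≤ r ^ 4 := le_self_pow₀ hr (by norm_num)
    have h2 : (r : ℝ) ^ 2 ≤ r ^ 4 := pow_le_pow_right₀ hr (by norm_num)
    have h3 : (r : ℝ) ^ 3 ≤ r ^ 4 := pow_le_pow_right₀ hr (by norm_num)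
    nlinarith

lemma abs_tsum_poisson_log_succ_sub_le (hr : 1 ≤ (r : ℝ)) :
    |∑' k, Po(r).real {k} * log (k + 1) - (log r + 1 / (2 * r))| ≤ 14000 / r ^ 2 := by
  have hr0 : (0 : ℝ) < r := by linarith
  set t : ℕ → ℝ := fun k => ((k : ℝ) + 1 - r) / r with ht
  have hlog : HasSum (fun k => Po(r).real {k} * log (1 + t k))
      (∑' k, Po(r).real {k} * log (k + 1) - log r) := by
    have := (summable_poissonMeasure_real_mul_log_succ r).hasSum.sub
      ((hasSum_poissonMeasure_real r).mul_right (log r))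
    rw [one_mul] at this
    refine this.congr_fun fun k => ?_
    rw [show 1 + t k = (k + 1) / r by rw [ht]; field_simp; ring, log_div (by positivity) hr0.ne']
    ring
  have htaylor : HasSum (fun k => Po(r).real {k} * (t k - t k ^ 2 / 2 + t k ^ 3 / 3))
      (1 / (2 * r) + (5 * r + 2) / (6 * r ^ 3) : ℝ) := by
    have h1 := hasSum_poisson_div_pow (j := 1) (by simpa using hasSum_poisson_succ_sub_pow_one r)
    have h2 := hasSum_poisson_div_pow (hasSum_poisson_succ_sub_pow_two r)
    have h3 := hasSum_poisson_div_pow (hasSum_poisson_succ_sub_pow_three r)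
    have := (h1.sub (h2.div_const 2)).add (h3.div_const 3)
    rw [show 1 / (r : ℝ) ^ 1 - (r + 1) / r ^ 2 / 2 + (4 * r + 1) / r ^ 3 / 3
      = 1 / (2 * r) + (5 * r + 2) / (6 * r ^ 3) by field_simp; ring] at this
    exact this.congr_fun fun k => by ring
  have hremainder := abs_tsum_poisson_log_taylor_remainder_le hr
  rw [((hlog.sub htaylor).congr_fun fun k => mul_sub _ _ _).tsum_eq] at hremainder
  have hc : (5 * r + 2) / (6 * r ^ 3) ≤ (700 / r ^ 2 : ℝ) := by
    rw [div_le_div_iff₀ (by positivity) (by positivity)]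
    nlinarith [pow_le_pow_right₀ hr (by norm_num : 2 ≤ 3)]
  calc |∑' k, Po(r).real {k} * log (k + 1) - (log r + 1 / (2 * r))|
      = |(∑' k, Po(r).real {k} * log (k + 1) - log r - (1 / (2 * r) + (5 * r + 2) / (6 * r ^ 3)))
          + (5 * r + 2) / (6 * r ^ 3)| := by ring_nf
    _ ≤ 13300 / r ^ 2 + 700 / r ^ 2 := (abs_add_le _ _).trans
        (add_le_add hremainder ((abs_of_nonneg (by positivity)).trans_le hc))
    _ = 14000 / r ^ 2 := by ring

lemma abs_integral_xlog_poissonMeasure_sub_le (hr : 1 ≤ (r : ℝ)) :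
    |∫ k, xlog k ∂Po(r) - (xlog r + 1 / 2)| ≤ 14000 / r := by
  have hr0 : (0 : ℝ) < r := by linarith
  rw [integral_xlog_poissonMeasure]
  calc |r * ∑' k, Po(r).real {k} * log (k + 1) - (xlog r + 1 / 2)|
      = r * |∑' k, Po(r).real {k} * log (k + 1) - (log r + 1 / (2 * r))| := by
        rw [← abs_of_pos hr0, ← abs_mul, abs_of_pos hr0, xlog]
        congr 1
        field_simp
    _ ≤ r * (14000 / r ^ 2) :=
        mul_le_mul_of_nonneg_left (abs_tsum_poisson_log_succ_sub_le hr) hr0.le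
    _ = 14000 / r := by field_simp

end PoissonXLogAsymptotics

namespace ProbabilityTheory

lemma iIndepFun.hasLaw_sum_poissonMeasure {Ω ι : Type*} [MeasurableSpace Ω] {P : Measure Ω}
    [IsProbabilityMeasure P] {X : ι → Ω → ℕ} {r : ι → ℝ≥0} (hind : iIndepFun X P)
    (hX : ∀ i, HasLaw (X i) Po(r i) P) (s : Finset ι) :
    HasLaw (∑ i ∈ s, X i) Po(∑ i ∈ s, r i) P := by
  classical
  induction s using Finset.induction_on with
  | empty =>
    rw [Finset.sum_empty, Finset.sum_empty, poissonMeasure_zero]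
    exact hasLaw_dirac_of_ae_eq (ae_of_all _ fun _ => rfl)
  | insert i s hi ih =>
    rw [Finset.sum_insert hi, Finset.sum_insert hi, add_comm (X i), add_comm (r i)]
    exact (hind.indepFun_finsetSum_of_notMem₀ (fun j => (hX j).aemeasurable) hi)
      |>.hasLaw_add_poissonMeasure ih (hX i)

lemma hasLaw_sum_sum_poissonMeasure {Ω N : Type*} [MeasurableSpace Ω] {P : Measure Ω}
    [IsProbabilityMeasure P] {X : N → N → Ω → ℕ} {rate : N → N → ℝ≥0}
    (hind : iIndepFun (fun p : N × N => X p.1 p.2) P)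
    (hlaw : ∀ i j, HasLaw (X i j) Po(rate i j) P) (I J : Finset N) :
    HasLaw (fun x => ∑ i ∈ I, ∑ j ∈ J, X i j x) Po(∑ i ∈ I, ∑ j ∈ J, rate i j) P := by
  have h := hind.hasLaw_sum_poissonMeasure (fun p => hlaw p.1 p.2) (I ×ˢ J)
  simp only [Finset.sum_product] at h
  convert h using 1
  ext x
  simp

variable {Ω : Type*} [MeasurableSpace Ω] {P : Measure Ω} {S : Ω → ℕ} {r : ℝ≥0}

lemma HasLaw.integrable_xlog (h : HasLaw S Po(r) P) : Integrable (fun x => xlog (S x)) P := by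
  have hint := integrable_xlog_poissonMeasure r
  rw [← h.map_eq] at hint
  exact (integrable_map_measure .of_discrete h.aemeasurable).mp hint

lemma HasLaw.integral_xlog (h : HasLaw S Po(r) P) :
    ∫ x, xlog (S x) ∂P = ∫ k, xlog k ∂Po(r) :=
  h.integral_comp (f := fun k : ℕ => xlog k) .of_discrete

end ProbabilityTheory

section Fibers

variable {N G R : Type*} [Fintype N] [DecidableEq G] [CommSemiring R] {g : N → G} {θ : N → R}

lemma sum_fiber_mul_comp (hθ : ∀ r, ∑ i ∈ Finset.univ.filter (fun i => g i = r), θ i = 1)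
    (f : G → R) (r : G) :
    ∑ i ∈ Finset.univ.filter (fun i => g i = r), θ i * f (g i) = f r := by
  rw [Finset.sum_congr rfl fun i hi => by rw [(Finset.mem_filter.mp hi).2], ← Finset.sum_mul,
    hθ, one_mul]

lemma sum_mul_comp [Fintype G] (hθ : ∀ r, ∑ i ∈ Finset.univ.filter (fun i => g i = r), θ i = 1)
    (f : G → R) : ∑ i, θ i * f (g i) = ∑ r, f r := by
  rw [← Finset.sum_fiberwise Finset.univ g]
  exact Finset.sum_congr rfl fun r _ => sum_fiber_mul_comp hθ f r

end Fibers

lemma xlog_mul (x y : ℝ) : xlog (x * y) = y * xlog x + x * xlog y := by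
  have h := Real.negMulLog_mul x y
  simp only [Real.negMulLog] at h
  simp only [xlog]
  linarith

section RateFunctional

variable {N G : Type*} [Fintype N] [Fintype G] (g : N → G) (θo θi : N → ℝ≥0) (ω : G → G → ℝ≥0)

/-- `llrStat` with each `xlog d` replaced by `φ` of the DCSBM mean of the degree `d`. -/
noncomputable def llrOfRates (φ : ℝ≥0 → ℝ) : ℝ :=
  (∑ i, ∑ s, (φ (θo i * ω (g i) s) + φ (θi i * ω s (g i))))
    - (∑ i, (φ (θo i * ∑ s, ω (g i) s) + φ (θi i * ∑ s, ω s (g i))))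
    - (∑ r, ∑ s, 2 * φ (ω r s))
    + (∑ r, (φ (∑ s, ω r s) + φ (∑ s, ω s r)))

lemma llrOfRates_add (φ ψ : ℝ≥0 → ℝ) :
    llrOfRates g θo θi ω (φ + ψ) = llrOfRates g θo θi ω φ + llrOfRates g θo θi ω ψ := by
  simp only [llrOfRates, Pi.add_apply, mul_add, Finset.sum_add_distrib]
  ring

lemma llrOfRates_const (c : ℝ) :
    llrOfRates g θo θi ω (fun _ => c)
      = 2 * c * ((Fintype.card G - 1) * (Fintype.card N - Fintype.card G)) := by
  simp only [llrOfRates, Finset.sum_const, Finset.card_univ, nsmul_eq_mul]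
  ring

variable {g θo θi ω} [DecidableEq G]

lemma sum_sum_xlog_mul_sub_sum_xlog_mul_sum {θ : N → ℝ} (w : G → G → ℝ)
    (hθ : ∀ r, ∑ i ∈ Finset.univ.filter (fun i => g i = r), θ i = 1) :
    (∑ i, ∑ s, xlog (θ i * w (g i) s)) - ∑ i, xlog (θ i * ∑ s, w (g i) s)
      = ∑ r, ((∑ s, xlog (w r s)) - xlog (∑ s, w r s)) := by
  have hrow : ∀ i, (∑ s, xlog (θ i * w (g i) s)) - xlog (θ i * ∑ s, w (g i) s)
      = θ i * ((∑ s, xlog (w (g i) s)) - xlog (∑ s, w (g i) s)) := fun i => by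
    simp only [xlog_mul, Finset.sum_add_distrib, ← Finset.sum_mul, ← Finset.mul_sum]
    ring
  rw [← Finset.sum_sub_distrib, Finset.sum_congr rfl fun i _ => hrow i]
  exact sum_mul_comp hθ (fun r => (∑ s, xlog (w r s)) - xlog (∑ s, w r s))

lemma llrOfRates_xlog
    (hconso : ∀ r, ∑ i ∈ Finset.univ.filter (fun i => g i = r), θo i = 1)
    (hconsi : ∀ r, ∑ i ∈ Finset.univ.filter (fun i => g i = r), θi i = 1) :
    llrOfRates g θo θi ω (fun x => xlog x) = 0 := by
  have hout := sum_sum_xlog_mul_sub_sum_xlog_mul_sum (θ := fun i => (θo i : ℝ))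
    (fun r s => (ω r s : ℝ)) (by exact_mod_cast hconso)
  have hin := sum_sum_xlog_mul_sub_sum_xlog_mul_sum (θ := fun i => (θi i : ℝ))
    (fun r s => (ω s r : ℝ)) (by exact_mod_cast hconsi)
  have hswap : ∑ r, ∑ s, xlog (ω s r : ℝ) = ∑ r, ∑ s, xlog (ω r s : ℝ) := Finset.sum_comm
  simp only [llrOfRates, NNReal.coe_mul, NNReal.coe_sum, Finset.sum_add_distrib,
    Finset.sum_sub_distrib, ← Finset.mul_sum] at hout hin ⊢
  linear_combination hout + hin + hswap

end RateFunctional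

lemma abs_sum_le_card_mul {ι : Type*} [Fintype ι] {f : ι → ℝ} {c : ℝ} (h : ∀ i, |f i| ≤ c) :
    |∑ i, f i| ≤ Fintype.card ι * c := by
  simpa using (Finset.abs_sum_le_sum_abs f Finset.univ).trans (Finset.sum_le_sum fun i _ => h i)

section RateBounds

variable {N G : Type*} [Fintype N] [DecidableEq G] {g : N → G} {θ : N → ℝ≥0}

lemma le_one_of_sum_fiber_eq_one (hθ : ∀ r, ∑ i ∈ Finset.univ.filter (fun i => g i = r), θ i = 1)
    (i : N) : θ i ≤ 1 :=
  hθ (g i) ▸ Finset.single_le_sum (fun j _ => zero_le) (by simp)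

lemma exists_eq_of_sum_fiber_eq_one
    (hθ : ∀ r, ∑ i ∈ Finset.univ.filter (fun i => g i = r), θ i = 1) (r : G) : ∃ i, g i = r := by
  by_contra! h
  simpa [Finset.filter_false_of_mem fun i _ => h i] using hθ r

variable [Fintype G] {θo θi : N → ℝ≥0} {ω : G → G → ℝ≥0}

lemma abs_llrOfRates_le {ψ : ℝ≥0 → ℝ} {m ε : ℝ} (hψ : ∀ x : ℝ≥0, m ≤ x → |ψ x| ≤ ε)
    (hconso : ∀ r, ∑ i ∈ Finset.univ.filter (fun i => g i = r), θo i = 1)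
    (hmo : ∀ i s, m ≤ (θo i * ω (g i) s : ℝ≥0)) (hmi : ∀ i s, m ≤ (θi i * ω s (g i) : ℝ≥0)) :
    |llrOfRates g θo θi ω ψ|
      ≤ 2 * (Fintype.card N + Fintype.card G) * (Fintype.card G + 1) * ε := by
  have hω : ∀ r s, m ≤ ω r s := fun r s => by
    obtain ⟨i, rfl⟩ := exists_eq_of_sum_fiber_eq_one hconso r
    exact (hmo i s).trans (NNReal.coe_le_coe.mpr
      (mul_le_of_le_one_left zero_le (le_one_of_sum_fiber_eq_one hconso i)))
  have hsum_le : ∀ (f : G → ℝ≥0) (s : G), f s ≤ ∑ s, f s := fun f s =>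
    Finset.single_le_sum (fun s _ => zero_le) (Finset.mem_univ s)
  have hpair : ∀ {x y : ℝ≥0}, m ≤ x → m ≤ y → |ψ x + ψ y| ≤ 2 * ε := fun hx hy =>
    (abs_add_le _ _).trans (by linarith [hψ _ hx, hψ _ hy])
  have hA := abs_sum_le_card_mul fun i => abs_sum_le_card_mul fun s => hpair (hmo i s) (hmi i s)
  have hB := abs_sum_le_card_mul fun i =>
    hpair (x := θo i * ∑ s, ω (g i) s) (y := θi i * ∑ s, ω s (g i))
      ((hmo i (g i)).trans (by gcongr; exact hsum_le _ (g i)))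
      ((hmi i (g i)).trans (by gcongr; exact hsum_le (ω · (g i)) (g i)))
  have hC := abs_sum_le_card_mul fun r =>
    abs_sum_le_card_mul (f := fun s => 2 * ψ (ω r s)) (c := 2 * ε) fun s => by
      rw [abs_mul, abs_two]
      linarith [hψ _ (hω r s)]
  have hD := abs_sum_le_card_mul fun r =>
    hpair (x := ∑ s, ω r s) (y := ∑ s, ω s r)
      ((hω r r).trans (by gcongr; exact hsum_le _ r))
      ((hω r r).trans (by gcongr; exact hsum_le (ω · r) r))
  unfold llrOfRates
  set A := ∑ i, ∑ s, (ψ (θo i * ω (g i) s) + ψ (θi i * ω s (g i)))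
  set B := ∑ i, (ψ (θo i * ∑ s, ω (g i) s) + ψ (θi i * ∑ s, ω s (g i)))
  set C := ∑ r, ∑ s, 2 * ψ (ω r s)
  set D := ∑ r, (ψ (∑ s, ω r s) + ψ (∑ s, ω s r))
  calc |A - B - C + D| ≤ |A| + |B| + |C| + |D| := abs_le.mpr ⟨by
        linarith [neg_abs_le A, le_abs_self B, le_abs_self C, neg_abs_le D], by
        linarith [le_abs_self A, neg_abs_le B, neg_abs_le C, le_abs_self D]⟩
    _ ≤ 2 * (Fintype.card N + Fintype.card G) * (Fintype.card G + 1) * ε := by linarith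

end RateBounds

section MinDegree

variable {N G : Type*} [Fintype N] [Fintype G] (g : N → G) (θo θi : N → ℝ≥0) (ω : G → G → ℝ≥0)

/-- `μ_min` in the paper. -/
noncomputable def minExpectedGroupDegree : ℝ :=
  ⨅ p : N × G, min ((θo p.1 * ω (g p.1) p.2 : ℝ≥0) : ℝ) ((θi p.1 * ω p.2 (g p.1) : ℝ≥0) : ℝ)

variable {g θo θi ω}

lemma minExpectedGroupDegree_le (i : N) (s : G) :
    minExpectedGroupDegree g θo θi ω ≤ (θo i * ω (g i) s : ℝ≥0)
      ∧ minExpectedGroupDegree g θo θi ω ≤ (θi i * ω s (g i) : ℝ≥0) :=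
  le_min_iff.mp (ciInf_le (Set.finite_range _).bddBelow (i, s))

lemma minExpectedGroupDegree_pos [Nonempty N] [Nonempty G] (hθo : ∀ i, 0 < θo i)
    (hθi : ∀ i, 0 < θi i) (hω : ∀ r s, 0 < ω r s) : 0 < minExpectedGroupDegree g θo θi ω := by
  obtain ⟨p, hp⟩ := exists_eq_ciInf_of_finite (f := fun p : N × G =>
    min ((θo p.1 * ω (g p.1) p.2 : ℝ≥0) : ℝ) ((θi p.1 * ω p.2 (g p.1) : ℝ≥0) : ℝ))
  rw [minExpectedGroupDegree, ← hp]
  exact lt_min (by exact_mod_cast mul_pos (hθo _) (hω _ _))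
    (by exact_mod_cast mul_pos (hθi _) (hω _ _))

end MinDegree

section Expectation

variable {Ω N G : Type*} [MeasurableSpace Ω] {P : Measure Ω} [IsProbabilityMeasure P] [Fintype N]
  {X : N → N → Ω → ℕ} [DecidableEq G] {g : N → G} {θo θi : N → ℝ≥0} {ω : G → G → ℝ≥0}

variable (P X g θo θi ω) in
structure IsDCSBM : Prop where
  indep : iIndepFun (fun p : N × N => X p.1 p.2) P
  hasLaw : ∀ i j, HasLaw (X i j) Po(θo i * θi j * ω (g i) (g j)) P
  sum_θo_fiber : ∀ r, ∑ i ∈ Finset.univ.filter (fun i => g i = r), θo i = 1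
  sum_θi_fiber : ∀ r, ∑ i ∈ Finset.univ.filter (fun i => g i = r), θi i = 1

lemma hasLaw_dOut (h : IsDCSBM P X g θo θi ω) (i : N) (s : G) :
    HasLaw (fun x => dOut g (X · · x) i s) Po(θo i * ω (g i) s) P := by
  convert hasLaw_sum_sum_poissonMeasure h.indep h.hasLaw {i} (Finset.univ.filter (g · = s)) using 2
  · simp [dOut]
  · simp only [Finset.sum_singleton, mul_assoc, ← Finset.mul_sum, sum_fiber_mul_comp h.sum_θi_fiber]

lemma hasLaw_dIn (h : IsDCSBM P X g θo θi ω) (i : N) (s : G) :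
    HasLaw (fun x => dIn g (X · · x) i s) Po(θi i * ω s (g i)) P := by
  convert hasLaw_sum_sum_poissonMeasure h.indep h.hasLaw (Finset.univ.filter (g · = s)) {i} using 2
  · simp [dIn]
  · simp only [Finset.sum_singleton, mul_assoc]
    exact (sum_fiber_mul_comp h.sum_θo_fiber (fun r => θi i * ω r (g i)) s).symm

lemma hasLaw_mEdges (h : IsDCSBM P X g θo θi ω) (r s : G) :
    HasLaw (fun x => mEdges g (X · · x) r s) Po(ω r s) P := by
  convert hasLaw_sum_sum_poissonMeasure h.indep h.hasLaw (Finset.univ.filter (g · = r))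
    (Finset.univ.filter (g · = s)) using 2
  · rfl
  · simp only [mul_assoc, ← Finset.mul_sum, sum_fiber_mul_comp h.sum_θi_fiber]
    exact (sum_fiber_mul_comp h.sum_θo_fiber (ω · s) r).symm

variable [Fintype G]

lemma hasLaw_dTotOut (h : IsDCSBM P X g θo θi ω) (i : N) :
    HasLaw (fun x => dTotOut (X · · x) i) Po(θo i * ∑ s, ω (g i) s) P := by
  convert hasLaw_sum_sum_poissonMeasure h.indep h.hasLaw {i} Finset.univ using 2
  · simp [dTotOut]
  · simp only [Finset.sum_singleton, mul_assoc, ← Finset.mul_sum, sum_mul_comp h.sum_θi_fiber]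

lemma hasLaw_dTotIn (h : IsDCSBM P X g θo θi ω) (i : N) :
    HasLaw (fun x => dTotIn (X · · x) i) Po(θi i * ∑ s, ω s (g i)) P := by
  convert hasLaw_sum_sum_poissonMeasure h.indep h.hasLaw Finset.univ {i} using 2
  · simp [dTotIn]
  · simp only [Finset.sum_singleton, mul_assoc, Finset.mul_sum]
    exact (sum_mul_comp h.sum_θo_fiber (fun r => θi i * ω r (g i))).symm

lemma hasLaw_dGrpOut (h : IsDCSBM P X g θo θi ω) (r : G) :
    HasLaw (fun x => dGrpOut g (X · · x) r) Po(∑ s, ω r s) P := by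
  convert hasLaw_sum_sum_poissonMeasure h.indep h.hasLaw (Finset.univ.filter (g · = r)) Finset.univ
    using 2
  · rfl
  · simp only [mul_assoc, ← Finset.mul_sum, sum_mul_comp h.sum_θi_fiber]
    exact (sum_fiber_mul_comp h.sum_θo_fiber (fun r => ∑ s, ω r s) r).symm

lemma hasLaw_dGrpIn (h : IsDCSBM P X g θo θi ω) (r : G) :
    HasLaw (fun x => dGrpIn g (X · · x) r) Po(∑ s, ω s r) P := by
  convert hasLaw_sum_sum_poissonMeasure h.indep h.hasLaw Finset.univ (Finset.univ.filter (g · = r))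
    using 2
  · simp only [dGrpIn, dTotIn]
    exact Finset.sum_comm
  · simp only [mul_assoc, ← Finset.mul_sum, sum_fiber_mul_comp h.sum_θi_fiber]
    exact (sum_mul_comp h.sum_θo_fiber (ω · r)).symm

theorem integral_llrStat_eq_llrOfRates (h : IsDCSBM P X g θo θi ω) :
    ∫ x, llrStat g (X · · x) ∂P = llrOfRates g θo θi ω (fun r => ∫ k, xlog k ∂Po(r)) := by
  have hpair {S T : Ω → ℕ} {a b : ℝ≥0} (hS : HasLaw S Po(a) P) (hT : HasLaw T Po(b) P) :
      Integrable (fun x => xlog (S x) + xlog (T x)) P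
        ∧ ∫ x, xlog (S x) + xlog (T x) ∂P = ∫ k, xlog k ∂Po(a) + ∫ k, xlog k ∂Po(b) :=
    ⟨hS.integrable_xlog.fun_add hT.integrable_xlog, by
      rw [integral_add hS.integrable_xlog hT.integrable_xlog, hS.integral_xlog, hT.integral_xlog]⟩
  have hA i s := hpair (hasLaw_dOut h i s) (hasLaw_dIn h i s)
  have hB i := hpair (hasLaw_dTotOut h i) (hasLaw_dTotIn h i)
  have hC r s := (hasLaw_mEdges h r s).integrable_xlog.const_mul 2
  have hD r := hpair (hasLaw_dGrpOut h r) (hasLaw_dGrpIn h r)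
  have hA' i := integrable_finsetSum Finset.univ fun s _ => (hA i s).1
  have hC' r := integrable_finsetSum Finset.univ fun s _ => hC r s
  have hAsum := integrable_finsetSum Finset.univ fun i _ => hA' i
  have hBsum := integrable_finsetSum Finset.univ fun i _ => (hB i).1
  have hCsum := integrable_finsetSum Finset.univ fun r _ => hC' r
  have hDsum := integrable_finsetSum Finset.univ fun r _ => (hD r).1
  unfold llrStat llrOfRates
  rw [integral_add ((hAsum.sub' hBsum).sub' hCsum) hDsum, integral_sub (hAsum.sub' hBsum) hCsum,
    integral_sub hAsum hBsum, integral_finsetSum _ fun i _ => hA' i,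
    integral_finsetSum _ fun i _ => (hB i).1, integral_finsetSum _ fun r _ => hC' r,
    integral_finsetSum _ fun r _ => (hD r).1]
  congr 1; congr 1; congr 1
  · refine Finset.sum_congr rfl fun i _ => ?_
    rw [integral_finsetSum _ fun s _ => (hA i s).1]
    exact Finset.sum_congr rfl fun s _ => (hA i s).2
  · exact Finset.sum_congr rfl fun i _ => (hB i).2
  · refine Finset.sum_congr rfl fun r _ => ?_
    rw [integral_finsetSum _ fun s _ => hC r s]
    exact Finset.sum_congr rfl fun s _ => by
      rw [integral_const_mul, (hasLaw_mEdges h r s).integral_xlog]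
  · exact Finset.sum_congr rfl fun r _ => (hD r).2

theorem abs_integral_llrStat_sub_le (h : IsDCSBM P X g θo θi ω)
    (hm : 1 ≤ minExpectedGroupDegree g θo θi ω) :
    |∫ x, llrStat g (X · · x) ∂P
        - ((Fintype.card G : ℝ) - 1) * ((Fintype.card N : ℝ) - Fintype.card G)|
      ≤ 56000 * (Fintype.card G + 1)
          * (Fintype.card N / minExpectedGroupDegree g θo θi ω) := by
  set m := minExpectedGroupDegree g θo θi ω
  set ψ : ℝ≥0 → ℝ := fun r => ∫ k, xlog k ∂Po(r) - (xlog r + 1 / 2) with hψ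
  have hsplit : (fun r : ℝ≥0 => ∫ k, xlog k ∂Po(r))
      = (fun r : ℝ≥0 => xlog r) + (fun _ => 1 / 2) + ψ := by
    funext r
    simp only [hψ, Pi.add_apply]
    ring
  have hψ_le : ∀ r : ℝ≥0, m ≤ r → |ψ r| ≤ 14000 / m := fun r hr =>
    (abs_integral_xlog_poissonMeasure_sub_le (hm.trans hr)).trans
      (div_le_div_of_nonneg_left (by norm_num) (by linarith) hr)
  have hK : (Fintype.card G : ℝ) ≤ Fintype.card N := by
    exact_mod_cast Fintype.card_le_of_surjective g (exists_eq_of_sum_fiber_eq_one h.sum_θo_fiber)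
  have herror := abs_llrOfRates_le hψ_le h.sum_θo_fiber
    (fun i s => (minExpectedGroupDegree_le i s).1) (fun i s => (minExpectedGroupDegree_le i s).2)
  rw [integral_llrStat_eq_llrOfRates h, hsplit, llrOfRates_add, llrOfRates_add,
    llrOfRates_xlog h.sum_θo_fiber h.sum_θi_fiber, llrOfRates_const]
  calc _ = |llrOfRates g θo θi ω ψ| := by ring_nf
    _ ≤ 2 * (Fintype.card N + Fintype.card G) * (Fintype.card G + 1) * (14000 / m) := herror
    _ ≤ 56000 * (Fintype.card G + 1) * (Fintype.card N / m) := by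
      rw [mul_div_assoc', mul_div_assoc']
      refine div_le_div_of_nonneg_right ?_ (by linarith)
      nlinarith [mul_le_mul_of_nonneg_left hK (by positivity : (0 : ℝ) ≤ Fintype.card G + 1)]

end Expectation

theorem expectation_llrStat_dense_limit_general
    {Ω : Type*} [MeasureSpace Ω] [IsProbabilityMeasure (ℙ : Measure Ω)]
    {G : Type*} [Fintype G] [DecidableEq G] [Nonempty G]
    (Nn : ℕ → ℕ)
    (g : (n : ℕ) → Fin (Nn n) → G)
    (θo θi : (n : ℕ) → Fin (Nn n) → ℝ≥0) (ω : ℕ → G → G → ℝ≥0)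
    (A : (n : ℕ) → Fin (Nn n) → Fin (Nn n) → Ω → ℕ)
    (hθo : ∀ n i, 0 < θo n i) (hθi : ∀ n i, 0 < θi n i)
    (hω : ∀ n r s, 0 < ω n r s)
    (hconso : ∀ n (r : G),
      ∑ i ∈ Finset.univ.filter (fun i => g n i = r), θo n i = 1)
    (hconsi : ∀ n (r : G),
      ∑ i ∈ Finset.univ.filter (fun i => g n i = r), θi n i = 1)
    (hindep : ∀ n, iIndepFun
      (fun p : Fin (Nn n) × Fin (Nn n) => A n p.1 p.2) ℙ)
    (hdist : ∀ n (i j : Fin (Nn n)), Measure.map (A n i j) ℙ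
      = poissonMeasure (θo n i * θi n j * ω n (g n i) (g n j)))
    (hdense : Tendsto
      (fun n : ℕ => (Nn n : ℝ) /
        ⨅ p : Fin (Nn n) × G,
          min ((θo n p.1 * ω n (g n p.1) p.2 : ℝ≥0) : ℝ)
              ((θi n p.1 * ω n p.2 (g n p.1) : ℝ≥0) : ℝ))
      atTop (nhds 0)) :
    Tendsto
      (fun n : ℕ => (∫ x, llrStat (g n) (fun i j => A n i j x) ∂ℙ)
        - ((Fintype.card G : ℝ) - 1) * ((Nn n : ℝ) - (Fintype.card G : ℝ)))
      atTop (nhds 0) := by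
  have hmodel : ∀ n, IsDCSBM ℙ (A n) (g n) (θo n) (θi n) (ω n) := fun n =>
    ⟨hindep n, fun i j => ⟨.of_map_ne_zero (by rw [hdist]; exact IsProbabilityMeasure.ne_zero _),
      hdist n i j⟩, hconso n, hconsi n⟩
  have hNpos : ∀ n, 0 < Nn n := fun n =>
    (exists_eq_of_sum_fiber_eq_one (hconso n) (Classical.arbitrary G)).choose.pos
  change Tendsto (fun n => (Nn n : ℝ) / minExpectedGroupDegree (g n) (θo n) (θi n) (ω n)) atTop
    (nhds 0) at hdense
  have hlarge : ∀ᶠ n in atTop, 1 ≤ minExpectedGroupDegree (g n) (θo n) (θi n) (ω n) := by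
    filter_upwards [hdense.eventually (gt_mem_nhds one_pos)] with n hn
    have : Nonempty (Fin (Nn n)) := ⟨⟨0, hNpos n⟩⟩
    rw [div_lt_one (minExpectedGroupDegree_pos (hθo n) (hθi n) (hω n))] at hn
    exact le_trans (by exact_mod_cast hNpos n) hn.le
  refine squeeze_zero_norm' (hlarge.mono fun n hn => ?_)
    (by simpa using hdense.const_mul (56000 * ((Fintype.card G : ℝ) + 1)))
  simpa using abs_integral_llrStat_sub_le (hmodel n) hn

/-- Theorem 1 of the paper: in the dense regime where every expected
group-degree grows faster than the number of nodes, the expected log-likelihood ratio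
under the DCSBM null approaches `(|G| − 1)(|N_n| − |G|)`. -/
theorem expectation_llrStat_dense_limit
    {Ω : Type*} [MeasureSpace Ω] [IsProbabilityMeasure (ℙ : Measure Ω)]
    {G : Type*} [Fintype G] [DecidableEq G] [Nonempty G]
    (Nn : ℕ → ℕ)
    (g : (n : ℕ) → Fin (Nn n) → G)
    (θo θi : (n : ℕ) → Fin (Nn n) → ℝ≥0) (ω : ℕ → G → G → ℝ≥0)
    (A : (n : ℕ) → Fin (Nn n) → Fin (Nn n) → Ω → ℕ)
    (hθo : ∀ n i, 0 < θo n i) (hθi : ∀ n i, 0 < θi n i)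
    (hω : ∀ n r s, 0 < ω n r s)
    (hconso : ∀ n (r : G),
      ∑ i ∈ Finset.univ.filter (fun i => g n i = r), θo n i = 1)
    (hconsi : ∀ n (r : G),
      ∑ i ∈ Finset.univ.filter (fun i => g n i = r), θi n i = 1)
    (hindep : ∀ n, iIndepFun
      (fun p : Fin (Nn n) × Fin (Nn n) => A n p.1 p.2) ℙ)
    (hdist : ∀ n (i j : Fin (Nn n)), Measure.map (A n i j) ℙ
      = poissonMeasure (θo n i * θi n j * ω n (g n i) (g n j)))
    (hsize : Tendsto (fun n => Nn n) atTop atTop)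
    (hdense : Tendsto
      (fun n : ℕ => (Nn n : ℝ) /
        ⨅ p : Fin (Nn n) × G,
          min ((θo n p.1 * ω n (g n p.1) p.2 : ℝ≥0) : ℝ)
              ((θi n p.1 * ω n p.2 (g n p.1) : ℝ≥0) : ℝ))
      atTop (nhds 0)) :
    Tendsto
      (fun n : ℕ => (∫ x, llrStat (g n) (fun i j => A n i j x) ∂ℙ)
        - ((Fintype.card G : ℝ) - 1) * ((Nn n : ℝ) - (Fintype.card G : ℝ)))
      atTop (nhds 0) :=
  expectation_llrStat_dense_limit_general Nn g θo θi ω A hθo hθi hω hconso hconsi hindep hdist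
    hdense
end

section
/- Under the fitted mixed-propensity model, for any two distinct groups r ≠ s in G, the expected number of sampled directed paths of length 2 from group r to group s equals the observed number: E[ Σ_{j∈N} Σ_{i : g i = r} Σ_{k : g k = s} Â i j · Â j k ] = Σ_{j∈N} d_{j,r}^i · d_{j,s}^o. -/
open MeasureTheory ProbabilityTheory
open scoped ProbabilityTheory NNReal

lemma hasSum_poissonWeight_mul_natCast (r : ℝ≥0) :
    HasSum (fun n : ℕ => Real.exp (-r) * r ^ n / n.factorial * n) r := by
  have hshift : HasSum (fun n : ℕ => Real.exp (-r) * r ^ (n + 1) / (n + 1).factorial * (n + 1 : ℕ))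
      r := by
    have h := (hasSum_one_poissonMeasure r).mul_left (r : ℝ)
    rw [mul_one] at h
    refine h.congr_fun fun n => ?_
    rw [Nat.factorial_succ]
    push_cast
    field_simp
    ring
  simpa using (hasSum_nat_add_iff (f := fun n : ℕ => Real.exp (-r) * r ^ n / n.factorial * n)
    1).mp hshift

lemma integrable_natCast_poissonMeasure (r : ℝ≥0) :
    Integrable (fun n : ℕ => (n : ℝ)) (poissonMeasure r) := by
  simpa [integrable_poissonMeasure_iff] using (hasSum_poissonWeight_mul_natCast r).summable

lemma integral_natCast_poissonMeasure (r : ℝ≥0) :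
    ∫ n, (n : ℝ) ∂(poissonMeasure r) = r := by
  simpa [integral_poissonMeasure' (integrable_natCast_poissonMeasure r)]
    using (hasSum_poissonWeight_mul_natCast r).tsum_eq

section PoissonRandomVariable

variable {Ω : Type*} [MeasurableSpace Ω] {μ : Measure Ω} {X : Ω → ℕ} {r : ℝ≥0}

lemma aemeasurable_of_map_eq_poissonMeasure (hX : μ.map X = poissonMeasure r) :
    AEMeasurable X μ :=
  .of_map_ne_zero (hX ▸ IsProbabilityMeasure.ne_zero _)

lemma integrable_natCast_of_map_eq_poissonMeasure (hX : μ.map X = poissonMeasure r) :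
    Integrable (fun ω => (X ω : ℝ)) μ := by
  have h := integrable_natCast_poissonMeasure r
  rw [← hX] at h
  exact (integrable_map_measure h.aestronglyMeasurable
    (aemeasurable_of_map_eq_poissonMeasure hX)).mp h

lemma integral_natCast_of_map_eq_poissonMeasure (hX : μ.map X = poissonMeasure r) :
    ∫ ω, (X ω : ℝ) ∂μ = r := by
  rw [← integral_natCast_poissonMeasure r, ← hX,
    integral_map (aemeasurable_of_map_eq_poissonMeasure hX) measurable_from_nat.aestronglyMeasurable]

end PoissonRandomVariable

section ProductOfSums

variable {Ω ι κ : Type*} [MeasurableSpace Ω] {μ : Measure Ω} {S : Finset ι} {T : Finset κ}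
  {X : ι → Ω → ℝ} {Y : κ → Ω → ℝ}

lemma integrable_sum_sum_mul_of_indepFun (hX : ∀ i ∈ S, Integrable (X i) μ)
    (hY : ∀ k ∈ T, Integrable (Y k) μ) (hXY : ∀ i ∈ S, ∀ k ∈ T, IndepFun (X i) (Y k) μ) :
    Integrable (fun ω => ∑ i ∈ S, ∑ k ∈ T, X i ω * Y k ω) μ :=
  integrable_finsetSum S fun i hi => integrable_finsetSum T fun k hk =>
    (hXY i hi k hk).integrable_mul (hX i hi) (hY k hk)

lemma integral_sum_sum_mul_of_indepFun (hX : ∀ i ∈ S, Integrable (X i) μ)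
    (hY : ∀ k ∈ T, Integrable (Y k) μ) (hXY : ∀ i ∈ S, ∀ k ∈ T, IndepFun (X i) (Y k) μ) :
    ∫ ω, ∑ i ∈ S, ∑ k ∈ T, X i ω * Y k ω ∂μ =
      (∑ i ∈ S, ∫ ω, X i ω ∂μ) * ∑ k ∈ T, ∫ ω, Y k ω ∂μ := by
  have hXYint : ∀ i ∈ S, ∀ k ∈ T, Integrable (fun ω => X i ω * Y k ω) μ :=
    fun i hi k hk => (hXY i hi k hk).integrable_mul (hX i hi) (hY k hk)
  rw [integral_finsetSum S fun i hi => integrable_finsetSum T (hXYint i hi), Finset.sum_mul_sum]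
  refine Finset.sum_congr rfl fun i hi => ?_
  rw [integral_finsetSum T (hXYint i hi)]
  exact Finset.sum_congr rfl fun k hk =>
    (hXY i hi k hk).integral_mul_eq_mul_integral (hX i hi).aestronglyMeasurable
      (hY k hk).aestronglyMeasurable

end ProductOfSums

section FittedModel

variable {N G : Type*} [Fintype N] [DecidableEq G] (g : N → G) (a : N → N → ℕ)

/-- The mean `d_{i, g j}^o d_{j, g i}^i / m_{g i, g j}` of `Â i j` in the fitted model. -/
noncomputable def fittedMean (i j : N) : ℝ≥0 :=
  ((dOut g a i (g j) * dIn g a j (g i) : ℕ) : ℝ≥0) / ((mEdges g a (g i) (g j) : ℕ) : ℝ≥0)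

lemma sum_dOut_eq_mEdges (r t : G) :
    ∑ i ∈ Finset.univ.filter (fun i => g i = r), dOut g a i t = mEdges g a r t :=
  rfl

lemma sum_dIn_eq_mEdges (t s : G) :
    ∑ k ∈ Finset.univ.filter (fun k => g k = s), dIn g a k t = mEdges g a t s :=
  Finset.sum_comm

lemma dIn_le_mEdges (j : N) (r : G) : dIn g a j r ≤ mEdges g a r (g j) :=
  Finset.sum_le_sum fun i _ =>
    Finset.single_le_sum (f := a i) (fun _ _ => Nat.zero_le _)
      (Finset.mem_filter.mpr ⟨Finset.mem_univ j, rfl⟩)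

lemma dOut_le_mEdges (j : N) (s : G) : dOut g a j s ≤ mEdges g a (g j) s := by
  rw [← sum_dOut_eq_mEdges]
  exact Finset.single_le_sum (f := fun i => dOut g a i s) (fun _ _ => Nat.zero_le _)
    (Finset.mem_filter.mpr ⟨Finset.mem_univ j, rfl⟩)

lemma natCast_mul_div_self_of_le {K : Type*} [Semifield K] [CharZero K] {x m : ℕ} (h : x ≤ m) :
    ((x * m : ℕ) : K) / (m : K) = x := by
  rcases Nat.eq_zero_or_pos m with rfl | hm
  · simp [Nat.le_zero.mp h]
  · push_cast
    exact mul_div_cancel_right₀ _ (Nat.cast_ne_zero.mpr hm.ne')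

lemma sum_fittedMean_left (j : N) (r : G) :
    ∑ i ∈ Finset.univ.filter (fun i => g i = r), fittedMean g a i j = dIn g a j r :=
  calc ∑ i ∈ Finset.univ.filter (fun i => g i = r), fittedMean g a i j
      = ∑ i ∈ Finset.univ.filter (fun i => g i = r),
          ((dOut g a i (g j) * dIn g a j r : ℕ) : ℝ≥0) / (mEdges g a r (g j) : ℕ) :=
        Finset.sum_congr rfl fun i hi => by rw [fittedMean, (Finset.mem_filter.mp hi).2]
    _ = ((dIn g a j r * mEdges g a r (g j) : ℕ) : ℝ≥0) / (mEdges g a r (g j) : ℕ) := by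
        rw [← Finset.sum_div, ← Nat.cast_sum, ← Finset.sum_mul, sum_dOut_eq_mEdges, mul_comm]
    _ = dIn g a j r := natCast_mul_div_self_of_le (dIn_le_mEdges g a j r)

lemma sum_fittedMean_right (j : N) (s : G) :
    ∑ k ∈ Finset.univ.filter (fun k => g k = s), fittedMean g a j k = dOut g a j s :=
  calc ∑ k ∈ Finset.univ.filter (fun k => g k = s), fittedMean g a j k
      = ∑ k ∈ Finset.univ.filter (fun k => g k = s),
          ((dOut g a j s * dIn g a k (g j) : ℕ) : ℝ≥0) / (mEdges g a (g j) s : ℕ) :=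
        Finset.sum_congr rfl fun k hk => by rw [fittedMean, (Finset.mem_filter.mp hk).2]
    _ = ((dOut g a j s * mEdges g a (g j) s : ℕ) : ℝ≥0) / (mEdges g a (g j) s : ℕ) := by
        rw [← Finset.sum_div, ← Nat.cast_sum, ← Finset.mul_sum, sum_dIn_eq_mEdges]
    _ = dOut g a j s := natCast_mul_div_self_of_le (dOut_le_mEdges g a j s)

end FittedModel

theorem expected_paths_two_cross_group_general
    {Ω : Type*} [MeasureSpace Ω]
    {N G : Type*} [Fintype N] [DecidableEq G]
    (g : N → G) (a : N → N → ℕ)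
    (Ahat : N → N → Ω → ℕ)
    (hindep : iIndepFun (fun p : N × N => Ahat p.1 p.2) ℙ)
    (hdist : ∀ i j : N, Measure.map (Ahat i j) ℙ
      = poissonMeasure (((dOut g a i (g j) * dIn g a j (g i) : ℕ) : ℝ≥0)
          / ((mEdges g a (g i) (g j) : ℕ) : ℝ≥0)))
    (r s : G) (hrs : r ≠ s) :
    (∫ x, (∑ j : N, ∑ i ∈ Finset.univ.filter (fun i => g i = r),
        ∑ k ∈ Finset.univ.filter (fun k => g k = s),
          (Ahat i j x : ℝ) * (Ahat j k x : ℝ)) ∂ℙ)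
      = ∑ j : N, (dIn g a j r : ℝ) * (dOut g a j s : ℝ) := by
  have hint : ∀ i j, Integrable (fun ω => (Ahat i j ω : ℝ)) ℙ := fun i j =>
    integrable_natCast_of_map_eq_poissonMeasure (hdist i j)
  have hmean : ∀ i j, ∫ ω, (Ahat i j ω : ℝ) ∂ℙ = fittedMean g a i j := fun i j =>
    integral_natCast_of_map_eq_poissonMeasure (hdist i j)
  have hpath : ∀ j, ∀ i ∈ Finset.univ.filter (fun i => g i = r),
      ∀ k ∈ Finset.univ.filter (fun k => g k = s),
        IndepFun (fun ω => (Ahat i j ω : ℝ)) (fun ω => (Ahat j k ω : ℝ)) ℙ := by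
    intro j i hi k hk
    have hne : (i, j) ≠ (j, k) := by
      rintro ⟨⟩
      exact hrs ((Finset.mem_filter.mp hi).2.symm.trans (Finset.mem_filter.mp hk).2)
    exact (hindep.indepFun hne).comp measurable_from_nat measurable_from_nat
  rw [integral_finsetSum _ fun j _ => integrable_sum_sum_mul_of_indepFun
    (fun i _ => hint i j) (fun k _ => hint j k) (hpath j)]
  refine Finset.sum_congr rfl fun j _ => ?_
  rw [integral_sum_sum_mul_of_indepFun (fun i _ => hint i j) (fun k _ => hint j k) (hpath j)]
  simp only [hmean]
  rw [← NNReal.coe_sum, ← NNReal.coe_sum, sum_fittedMean_left, sum_fittedMean_right]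
  simp only [NNReal.coe_natCast]

/-- under the fitted mixed-propensity model, for distinct groups
`r ≠ s`, the expected number of sampled directed paths of length 2 from group `r` to
group `s` equals the observed number `∑_j d_{j,r}^i d_{j,s}^o`. -/
theorem expected_paths_two_cross_group
    {Ω : Type*} [MeasureSpace Ω] [IsProbabilityMeasure (ℙ : Measure Ω)]
    {N G : Type*} [Fintype N] [Fintype G] [DecidableEq G]
    (g : N → G) (a : N → N → ℕ)
    (hm : ∀ r s : G, 0 < mEdges g a r s)
    (Ahat : N → N → Ω → ℕ)
    (hindep : iIndepFun (fun p : N × N => Ahat p.1 p.2) ℙ)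
    (hdist : ∀ i j : N, Measure.map (Ahat i j) ℙ
      = poissonMeasure (((dOut g a i (g j) * dIn g a j (g i) : ℕ) : ℝ≥0)
          / ((mEdges g a (g i) (g j) : ℕ) : ℝ≥0)))
    (r s : G) (hrs : r ≠ s) :
    (∫ x, (∑ j : N, ∑ i ∈ Finset.univ.filter (fun i => g i = r),
        ∑ k ∈ Finset.univ.filter (fun k => g k = s),
          (Ahat i j x : ℝ) * (Ahat j k x : ℝ)) ∂ℙ)
      = ∑ j : N, (dIn g a j r : ℝ) * (dOut g a j s : ℝ) :=
  expected_paths_two_cross_group_general g a Ahat hindep hdist r s hrs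
end
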